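/- arXiv:2003.06041 — 7 statements merged into one kernel-verified Lean document; each statement's English description precedes it below -/
import Mathlib

section
/- There is no function A : ℝ × ℝ → ℝ that is simultaneously (i) sound (A(ρ₁,ρ₂) ≥ 0 if and only if ρ₁ ≥ 0 and ρ₂ ≥ 0), (ii) idempotent (A(ρ,ρ) = ρ for all ρ), and (iii) continuously differentiable on all of ℝ². -/
/-!
Soundness forces `A ≤ 0 = A (0, 0)` along any curve through the origin that leaves the closed
quadrant at once, such as `t ↦ (t, -t²)` and `t ↦ (-t², t)`. Their velocities `(1, 0)` and
`(0, 1)` therefore lie in the kernel of `DA(0, 0)`, so `DA(0, 0) (1, 1) = 0`, while idempotence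
makes it the derivative of `r ↦ A (r, r) = r`, which is `1`.
-/

section Curves

variable {E : Type*} [NormedAddCommGroup E] [NormedSpace ℝ E] {f : E → ℝ} {f' : E →L[ℝ] ℝ}
  {c : ℝ → E} {v : E}

theorem HasFDerivAt.apply_eq_zero_of_isLocalMax_comp {x : E} {t : ℝ} (hf : HasFDerivAt f f' x)
    (hc : HasDerivAt c v t) (hct : x = c t) (hmax : IsLocalMax (f ∘ c) t) : f' v = 0 :=
  hmax.hasDerivAt_eq_zero (hf.comp_hasDerivAt_of_eq t hc hct)

theorem HasFDerivAt.apply_eq_one_of_comp_eq_id {x : E} {t : ℝ} (hf : HasFDerivAt f f' x)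
    (hc : HasDerivAt c v t) (hct : x = c t) (hfc : f ∘ c = id) : f' v = 1 :=
  (hf.comp_hasDerivAt_of_eq t hc hct).unique (hfc ▸ hasDerivAt_id t)

end Curves

theorem isLocalMax_comp_of_sound {A : ℝ × ℝ → ℝ}
    (hsound : ∀ p : ℝ × ℝ, 0 ≤ A p ↔ 0 ≤ p.1 ∧ 0 ≤ p.2)
    {c : ℝ → ℝ × ℝ} (hc0 : A (c 0) = 0) (hout : ∀ t ≠ 0, (c t).1 < 0 ∨ (c t).2 < 0) :
    IsLocalMax (A ∘ c) 0 := by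
  refine Filter.Eventually.of_forall fun t => ?_
  rcases eq_or_ne t 0 with rfl | ht
  · exact le_rfl
  · have hneg : A (c t) < 0 := by
      rw [← not_le, hsound]
      rcases hout t ht with h | h <;> simp [h.not_ge]
    simpa [hc0] using hneg.le

theorem hasDerivAt_neg_sq_zero : HasDerivAt (fun t : ℝ => -t ^ 2) 0 0 := by
  simpa using (hasDerivAt_pow 2 (0 : ℝ)).fun_neg

/-- There is no binary AND-operator that is simultaneously sound, idempotent,
and continuously differentiable on all of ℝ². -/
theorem no_sound_idempotent_smooth_and :
    ¬ ∃ A : ℝ × ℝ → ℝ,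
      (∀ p : ℝ × ℝ, 0 ≤ A p ↔ 0 ≤ p.1 ∧ 0 ≤ p.2) ∧
      (∀ r : ℝ, A (r, r) = r) ∧
      ContDiff ℝ 1 A := by
  rintro ⟨A, hsound, hidem, hsmooth⟩
  set L := fderiv ℝ A (0, 0)
  have hA : HasFDerivAt A L (0, 0) := (hsmooth.differentiable one_ne_zero _).hasFDerivAt
  have hA0 : A (0, 0) = 0 := hidem 0
  have hneg : ∀ t : ℝ, t ≠ 0 → -t ^ 2 < 0 := fun _ ht => neg_neg_of_pos (sq_pos_of_ne_zero ht)
  have hdiag : L (1, 1) = 1 :=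
    hA.apply_eq_one_of_comp_eq_id (c := fun r => (r, r))
      ((hasDerivAt_id 0).prodMk (hasDerivAt_id 0)) rfl (funext hidem)
  have hfst : L (1, 0) = 0 :=
    hA.apply_eq_zero_of_isLocalMax_comp (c := fun t => (t, -t ^ 2))
      ((hasDerivAt_id 0).prodMk hasDerivAt_neg_sq_zero) (by simp)
      (isLocalMax_comp_of_sound hsound (by simpa using hA0) fun t ht => .inr (hneg t ht))
  have hsnd : L (0, 1) = 0 :=
    hA.apply_eq_zero_of_isLocalMax_comp (c := fun t => (-t ^ 2, t))
      (hasDerivAt_neg_sq_zero.prodMk (hasDerivAt_id 0)) (by simp)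
      (isLocalMax_comp_of_sound hsound (by simpa using hA0) fun t ht => .inl (hneg t ht))
  have hsplit : L (1, 1) = L (1, 0) + L (0, 1) := by
    rw [← L.map_add, Prod.mk_add_mk, add_zero, zero_add]
  norm_num [hdiag, hfst, hsnd] at hsplit
end

section
/- Suppose A : (Fin M → ℝ) → ℝ is sound, continuous, min/max bounded, and symmetric, and fix values ρ_j > 0 for j ≠ 1. If the partial derivative of A with respect to ρ₁ exists at ρ₁ = 0 (with the other arguments fixed at the positive values ρ_j), then this partial derivative equals 1. -/
/-- The minimum of the components of `ρ`. -/
noncomputable def rmin {M : ℕ} (hM : 0 < M) (ρ : Fin M → ℝ) : ℝ :=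
  Finset.univ.inf' (by rwa [Finset.univ_nonempty_iff, ← Fin.pos_iff_nonempty]) ρ

/-- The maximum of the components of `ρ`. -/
noncomputable def rmax {M : ℕ} (hM : 0 < M) (ρ : Fin M → ℝ) : ℝ :=
  Finset.univ.sup' (by rwa [Finset.univ_nonempty_iff, ← Fin.pos_iff_nonempty]) ρ

/-! Soundness, together with the continuity that differentiability gives, forces `A = 0` at
`ρ₁ = 0`, and the lower bound `min ≤ A` gives `ρ₁ ≤ A` for `ρ₁` near `0`. So `ρ₁ ↦ A - ρ₁`
has a local minimum at `0`, where Fermat's theorem makes its derivative `d - 1` vanish. -/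

open Filter Topology

theorem le_rmin_iff {M : ℕ} (hM : 0 < M) (ρ : Fin M → ℝ) (t : ℝ) :
    t ≤ rmin hM ρ ↔ ∀ i, t ≤ ρ i := by
  simp [rmin, Finset.le_inf'_iff]

theorem HasDerivAt.eq_of_eventually_le_of_eq {f g : ℝ → ℝ} {f' g' x : ℝ}
    (hf : HasDerivAt f f' x) (hg : HasDerivAt g g' x) (hle : g ≤ᶠ[𝓝 x] f) (heq : f x = g x) :
    f' = g' := by
  have hmin : IsLocalMin (f - g) x :=
    hle.mono fun t ht => by simpa [heq] using ht
  exact sub_eq_zero.mp (hmin.hasDerivAt_eq_zero (hf.sub hg))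

theorem partial_deriv_at_zero_eq_one_general
    (M : ℕ) (hM : 0 < M) (A : (Fin M → ℝ) → ℝ)
    (hsound : ∀ ρ : Fin M → ℝ, 0 ≤ A ρ ↔ ∀ i, 0 ≤ ρ i)
    (hbound : ∀ ρ : Fin M → ℝ, rmin hM ρ ≤ A ρ ∧ A ρ ≤ rmax hM ρ)
    (i₀ : Fin M) (ρ : Fin M → ℝ) (hpos : ∀ j, j ≠ i₀ → 0 < ρ j)
    (d : ℝ)
    (hderiv : HasDerivAt (fun t : ℝ => A (Function.update ρ i₀ t)) d 0) :
    d = 1 := by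
  set f : ℝ → ℝ := fun t => A (Function.update ρ i₀ t)
  have hlow : ∀ t, (∀ j, j ≠ i₀ → t ≤ ρ j) → t ≤ f t := fun t ht =>
    ((le_rmin_iff hM _ t).2 fun i => by
      by_cases hi : i = i₀
      · simp [hi]
      · simpa [hi] using ht i hi).trans (hbound _).1
  have hneg : ∀ t < 0, f t < 0 := fun t ht =>
    lt_of_not_ge fun h => ht.not_ge (by simpa using (hsound _).1 h i₀)
  have hf0 : f 0 = 0 := le_antisymm
    (le_of_tendsto (hderiv.continuousAt.tendsto.mono_left nhdsWithin_le_nhds)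
      (eventually_nhdsWithin_of_forall (s := Set.Iio 0) fun t ht => (hneg t ht).le))
    (hlow 0 fun j hj => (hpos j hj).le)
  have hnear : ∀ᶠ t in 𝓝 0, ∀ j, j ≠ i₀ → t ≤ ρ j :=
    eventually_all.2 fun j => by
      by_cases hj : j = i₀
      · exact Eventually.of_forall fun _ h => absurd hj h
      · exact (eventually_le_nhds (hpos j hj)).mono fun _ h _ => h
  exact hderiv.eq_of_eventually_le_of_eq (hasDerivAt_id 0) (hnear.mono hlow) hf0

/-- If an AND-operator is sound, continuous, min/max bounded and symmetric, and the
other arguments are fixed at positive values, then the partial derivative with respect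
to the remaining argument at `0`, if it exists, equals `1`. -/
theorem partial_deriv_at_zero_eq_one
    (M : ℕ) (hM : 0 < M) (A : (Fin M → ℝ) → ℝ)
    (hsound : ∀ ρ : Fin M → ℝ, 0 ≤ A ρ ↔ ∀ i, 0 ≤ ρ i)
    (hcont : Continuous A)
    (hbound : ∀ ρ : Fin M → ℝ, rmin hM ρ ≤ A ρ ∧ A ρ ≤ rmax hM ρ)
    (hsym : ∀ (σ : Equiv.Perm (Fin M)) (ρ : Fin M → ℝ), A (ρ ∘ σ) = A ρ)
    (i₀ : Fin M) (ρ : Fin M → ℝ) (hpos : ∀ j, j ≠ i₀ → 0 < ρ j)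
    (d : ℝ)
    (hderiv : HasDerivAt (fun t : ℝ => A (Function.update ρ i₀ t)) d 0) :
    d = 1 :=
  partial_deriv_at_zero_eq_one_general M hM A hsound hbound i₀ ρ hpos d hderiv
end

section
/- For ν > 0 and ρ : Fin M → ℝ with ρ_min := min_i ρ_i < 0, define A(ρ) = (Σ_i ρ_min·e^{ρ̃_i}·e^{ν ρ̃_i}) / (Σ_i e^{ν ρ̃_i}) where ρ̃_i = (ρ_i − ρ_min)/ρ_min. Then A(ρ) < 0, and moreover ρ_min ≤ A(ρ) ≤ max_i ρ_i. -/
open Finset Real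

lemma Finset.sum_mul_div_sum_eq_centerMass {ι R : Type*} [Field R] (s : Finset ι)
    (v w : ι → R) : (∑ i ∈ s, v i * w i) / ∑ i ∈ s, w i = s.centerMass w v := by
  simp only [centerMass, smul_eq_mul, mul_comm (w _), div_eq_inv_mul]

lemma le_mul_exp_sub_div {m x : ℝ} (hm : m ≤ 0) (hx : m ≤ x) :
    m ≤ m * exp ((x - m) / m) := by
  have hexp : exp ((x - m) / m) ≤ 1 :=
    exp_le_one_iff.mpr (div_nonpos_of_nonneg_of_nonpos (sub_nonneg.mpr hx) hm)
  nlinarith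

lemma mul_exp_sub_div_le {m : ℝ} (hm : m < 0) (x : ℝ) : m * exp ((x - m) / m) ≤ x :=
  calc m * exp ((x - m) / m) ≤ m * ((x - m) / m + 1) :=
        mul_le_mul_of_nonpos_left (add_one_le_exp _) hm.le
    _ = x := by rw [mul_add, mul_div_cancel₀ _ hm.ne]; ring

theorem negative_branch_sound_and_bounded_general
    (M : ℕ) (hM : 0 < M) (ν : ℝ)
    (ρ : Fin M → ℝ) (hneg : rmin hM ρ < 0) :
    (∑ i, rmin hM ρ * Real.exp ((ρ i - rmin hM ρ) / rmin hM ρ) *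
        Real.exp (ν * ((ρ i - rmin hM ρ) / rmin hM ρ))) /
      (∑ i, Real.exp (ν * ((ρ i - rmin hM ρ) / rmin hM ρ))) < 0 ∧
    rmin hM ρ ≤
      (∑ i, rmin hM ρ * Real.exp ((ρ i - rmin hM ρ) / rmin hM ρ) *
          Real.exp (ν * ((ρ i - rmin hM ρ) / rmin hM ρ))) /
        (∑ i, Real.exp (ν * ((ρ i - rmin hM ρ) / rmin hM ρ))) ∧
    (∑ i, rmin hM ρ * Real.exp ((ρ i - rmin hM ρ) / rmin hM ρ) *
        Real.exp (ν * ((ρ i - rmin hM ρ) / rmin hM ρ))) /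
      (∑ i, Real.exp (ν * ((ρ i - rmin hM ρ) / rmin hM ρ))) ≤ rmax hM ρ := by
  have hne : (univ : Finset (Fin M)).Nonempty := univ_nonempty_iff.mpr (Fin.pos_iff_nonempty.mp hM)
  have hw₀ : ∀ i ∈ univ, 0 ≤ exp (ν * ((ρ i - rmin hM ρ) / rmin hM ρ)) :=
    fun _ _ ↦ (exp_pos _).le
  have hw₁ : 0 < ∑ i, exp (ν * ((ρ i - rmin hM ρ) / rmin hM ρ)) :=
    sum_pos (fun _ _ ↦ exp_pos _) hne
  rw [sum_mul_div_sum_eq_centerMass]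
  refine ⟨(centerMass_le_sup hw₀ hw₁).trans_lt ((sup'_lt_iff _).mpr fun _ _ ↦ ?_),
    (le_inf' _ _ fun i _ ↦ ?_).trans (inf_le_centerMass hw₀ hw₁),
    (centerMass_le_sup hw₀ hw₁).trans (sup'_le _ _ fun i _ ↦ ?_)⟩
  · exact mul_neg_of_neg_of_pos hneg (exp_pos _)
  · exact le_mul_exp_sub_div hneg.le (inf'_le ρ (mem_univ i))
  · exact (mul_exp_sub_div_le hneg (ρ i)).trans (le_sup' ρ (mem_univ i))

/-- The negative branch of the new AND-operator is strictly negative and min/max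
bounded when `ρ_min < 0`. -/
theorem negative_branch_sound_and_bounded
    (M : ℕ) (hM : 0 < M) (ν : ℝ) (hν : 0 < ν)
    (ρ : Fin M → ℝ) (hneg : rmin hM ρ < 0) :
    (∑ i, rmin hM ρ * Real.exp ((ρ i - rmin hM ρ) / rmin hM ρ) *
        Real.exp (ν * ((ρ i - rmin hM ρ) / rmin hM ρ))) /
      (∑ i, Real.exp (ν * ((ρ i - rmin hM ρ) / rmin hM ρ))) < 0 ∧
    rmin hM ρ ≤
      (∑ i, rmin hM ρ * Real.exp ((ρ i - rmin hM ρ) / rmin hM ρ) *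
          Real.exp (ν * ((ρ i - rmin hM ρ) / rmin hM ρ))) /
        (∑ i, Real.exp (ν * ((ρ i - rmin hM ρ) / rmin hM ρ))) ∧
    (∑ i, rmin hM ρ * Real.exp ((ρ i - rmin hM ρ) / rmin hM ρ) *
        Real.exp (ν * ((ρ i - rmin hM ρ) / rmin hM ρ))) /
      (∑ i, Real.exp (ν * ((ρ i - rmin hM ρ) / rmin hM ρ))) ≤ rmax hM ρ :=
  negative_branch_sound_and_bounded_general M hM ν ρ hneg
end

section
/- The newly proposed AND-operator A_ν is scale-invariant: for every α > 0 and every ρ : Fin M → ℝ, A_ν(α·ρ₁,…,α·ρ_M) = α·A_ν(ρ₁,…,ρ_M). -/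
open Finset

/-- The newly proposed AND-operator `A_ν`. -/
noncomputable def Anu (ν : ℝ) {M : ℕ} (hM : 0 < M) (ρ : Fin M → ℝ) : ℝ :=
  if rmin hM ρ < 0 then
    (∑ i, rmin hM ρ * Real.exp ((1 + ν) * ((ρ i - rmin hM ρ) / rmin hM ρ))) /
      (∑ i, Real.exp (ν * ((ρ i - rmin hM ρ) / rmin hM ρ)))
  else if 0 < rmin hM ρ then
    (∑ i, ρ i * Real.exp (-ν * ((ρ i - rmin hM ρ) / rmin hM ρ))) /
      (∑ i, Real.exp (-ν * ((ρ i - rmin hM ρ) / rmin hM ρ)))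
  else 0

lemma rmin_const_mul {M : ℕ} (hM : 0 < M) {α : ℝ} (hα : 0 ≤ α) (ρ : Fin M → ℝ) :
    rmin hM (fun i => α * ρ i) = α * rmin hM ρ :=
  (Finset.apply_inf'_eq_inf'_comp _ (fun x => α * x) (fun _ _ => mul_min_of_nonneg _ _ hα)).symm

lemma mul_neg_iff_of_pos_left {R : Type*} [Ring R] [LinearOrder R] [IsStrictOrderedRing R]
    {a b : R} (ha : 0 < a) : a * b < 0 ↔ b < 0 := by
  simp [mul_neg_iff, ha, ha.not_gt]

lemma mul_sub_mul_div_mul_left {K : Type*} [Field K] {α : K} (hα : α ≠ 0) (x m : K) :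
    (α * x - α * m) / (α * m) = (x - m) / m := by
  rw [← mul_sub, mul_div_mul_left _ _ hα]

lemma mul_sum_div {ι K : Type*} [DivisionSemiring K] (s : Finset ι) (α : K) (f : ι → K)
    (g : K) :
    (∑ i ∈ s, α * f i) / g = α * ((∑ i ∈ s, f i) / g) := by
  rw [← Finset.mul_sum, mul_div_assoc]

theorem Anu_scale_invariant_general (ν : ℝ) (M : ℕ) (hM : 0 < M)
    (α : ℝ) (hα : 0 < α) (ρ : Fin M → ℝ) :
    Anu ν hM (fun i => α * ρ i) = α * Anu ν hM ρ := by
  unfold Anu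
  simp only [rmin_const_mul hM hα.le, mul_sub_mul_div_mul_left hα.ne', mul_neg_iff_of_pos_left hα,
    mul_pos_iff_of_pos_left hα, mul_assoc, mul_sum_div, mul_ite, mul_zero]

/-- The new AND-operator is scale-invariant. -/
theorem Anu_scale_invariant (ν : ℝ) (hν : 0 < ν) (M : ℕ) (hM : 0 < M)
    (α : ℝ) (hα : 0 < α) (ρ : Fin M → ℝ) :
    Anu ν hM (fun i => α * ρ i) = α * Anu ν hM ρ :=
  Anu_scale_invariant_general ν M hM α hα ρ
end

section
/- For the newly proposed AND-operator A_ν with ν > 0 and fixed ρ_j > 0 for j ≠ 1, the limit of A_ν(ρ₁,ρ₂,…,ρ_M) as ρ₁ → 0 (from either side, with the other arguments held fixed at positive values) equals 0, and the limit of A_ν(ρ₁,ρ₂,…,ρ_M)/ρ₁ as ρ₁ → 0 equals 1. -/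
open Finset

open Filter Topology Function

/-! For `t` near `0` the perturbed coordinate `t` is the minimum, so `A_ν / t` is a ratio of two
sums of weights evaluated at the relative gaps `(ρ_j - t) / t`. The gap of the minimal coordinate is
`0`, where every weight equals `1`; the other gaps tend to `-∞` as `t → 0⁻` and to `+∞` as `t → 0⁺`,
where the weights (including `(s + 1) e^{-ν s}`, coming from `ρ_j / t = s + 1`) vanish. Both sums
therefore tend to `1`, and so does `A_ν / t`; multiplying by `t` gives the first limit. -/

lemma tendsto_sub_div_nhdsLT_atBot {a : ℝ} (ha : 0 < a) :
    Tendsto (fun t : ℝ => (a - t) / t) (𝓝[<] 0) atBot := by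
  have h : Tendsto (fun t : ℝ => a * t⁻¹ + -1) (𝓝[<] 0) atBot :=
    tendsto_atBot_add_const_right _ _ (tendsto_inv_nhdsLT_zero.const_mul_atBot ha)
  refine h.congr' ?_
  filter_upwards [self_mem_nhdsWithin] with t (ht : t < 0)
  rw [sub_div, div_self ht.ne, div_eq_mul_inv, sub_eq_add_neg]

lemma tendsto_sub_div_nhdsGT_atTop {a : ℝ} (ha : 0 < a) :
    Tendsto (fun t : ℝ => (a - t) / t) (𝓝[>] 0) atTop := by
  have h : Tendsto (fun t : ℝ => a * t⁻¹ + -1) (𝓝[>] 0) atTop :=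
    tendsto_atTop_add_const_right _ _ (tendsto_inv_nhdsGT_zero.const_mul_atTop ha)
  refine h.congr' ?_
  filter_upwards [self_mem_nhdsWithin] with t (ht : 0 < t)
  rw [sub_div, div_self ht.ne', div_eq_mul_inv, sub_eq_add_neg]

lemma tendsto_exp_const_mul_atBot {c : ℝ} (hc : 0 < c) :
    Tendsto (fun s : ℝ => Real.exp (c * s)) atBot (𝓝 0) :=
  Real.tendsto_exp_atBot.comp (tendsto_id.const_mul_atBot hc)

lemma tendsto_exp_neg_mul_atTop {ν : ℝ} (hν : 0 < ν) :
    Tendsto (fun s : ℝ => Real.exp (-ν * s)) atTop (𝓝 0) := by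
  refine (Real.tendsto_exp_neg_atTop_nhds_zero.comp (tendsto_id.const_mul_atTop hν)).congr
    fun s => ?_
  simp [neg_mul]

lemma tendsto_add_one_mul_exp_neg_mul_atTop {ν : ℝ} (hν : 0 < ν) :
    Tendsto (fun s : ℝ => (s + 1) * Real.exp (-ν * s)) atTop (𝓝 0) := by
  have h := (tendsto_rpow_mul_exp_neg_mul_atTop_nhds_zero 1 ν hν).add
    (tendsto_exp_neg_mul_atTop hν)
  simpa [Real.rpow_one, add_mul] using h

lemma tendsto_sum_update_sub_div {ι : Type*} [Fintype ι] [DecidableEq ι] {l L : Filter ℝ}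
    {g : ℝ → ℝ} (hg₀ : g 0 = 1) (hg : Tendsto g L (𝓝 0))
    (hgap : ∀ a : ℝ, 0 < a → Tendsto (fun t : ℝ => (a - t) / t) l L)
    {ρ : ι → ℝ} {i₀ : ι} (hpos : ∀ j, j ≠ i₀ → 0 < ρ j) :
    Tendsto (fun t => ∑ i, g ((update ρ i₀ t i - t) / t)) l (𝓝 1) := by
  have h : Tendsto (fun t => ∑ i, g ((update ρ i₀ t i - t) / t)) l
      (𝓝 (∑ i, if i = i₀ then 1 else 0)) := by
    refine tendsto_finsetSum _ fun i _ => ?_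
    rcases eq_or_ne i i₀ with rfl | hi
    · simpa [hg₀] using tendsto_const_nhds
    · simpa [hi, Function.comp_def] using hg.comp (hgap _ (hpos i hi))
  simpa using h

lemma rmin_update_eq {M : ℕ} (hM : 0 < M) {ρ : Fin M → ℝ} {i₀ : Fin M} {t : ℝ}
    (ht : ∀ j, j ≠ i₀ → t ≤ ρ j) : rmin hM (update ρ i₀ t) = t := by
  refine le_antisymm ((Finset.inf'_le _ (Finset.mem_univ i₀)).trans_eq (update_self ..)) ?_
  refine Finset.le_inf' _ _ fun j _ => ?_
  rcases eq_or_ne j i₀ with rfl | hj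
  · simp
  · simpa [hj] using ht j hj

lemma eventually_rmin_update_eq {M : ℕ} (hM : 0 < M) {ρ : Fin M → ℝ} {i₀ : Fin M}
    (hpos : ∀ j, j ≠ i₀ → 0 < ρ j) : ∀ᶠ t in 𝓝 0, rmin hM (update ρ i₀ t) = t := by
  have h : ∀ᶠ t in 𝓝 (0 : ℝ), ∀ j, j ≠ i₀ → t < ρ j := by
    refine eventually_all.2 fun j => ?_
    rcases eq_or_ne j i₀ with rfl | hj
    · exact .of_forall fun _ h => absurd rfl h
    · exact (eventually_lt_nhds (hpos j hj)).mono fun _ ht _ => ht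
  exact h.mono fun t ht => rmin_update_eq hM fun j hj => (ht j hj).le

section Ratio

variable {ν : ℝ} {M : ℕ} (hM : 0 < M) {ρ : Fin M → ℝ}

lemma Anu_div_rmin_of_neg (h : rmin hM ρ < 0) :
    Anu ν hM ρ / rmin hM ρ =
      (∑ i, Real.exp ((1 + ν) * ((ρ i - rmin hM ρ) / rmin hM ρ))) /
        ∑ i, Real.exp (ν * ((ρ i - rmin hM ρ) / rmin hM ρ)) := by
  rw [Anu, if_pos h, ← Finset.mul_sum, div_right_comm, mul_div_cancel_left₀ _ h.ne]

lemma Anu_div_rmin_of_pos (h : 0 < rmin hM ρ) :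
    Anu ν hM ρ / rmin hM ρ =
      (∑ i, ((ρ i - rmin hM ρ) / rmin hM ρ + 1) *
          Real.exp (-ν * ((ρ i - rmin hM ρ) / rmin hM ρ))) /
        ∑ i, Real.exp (-ν * ((ρ i - rmin hM ρ) / rmin hM ρ)) := by
  rw [Anu, if_neg h.not_gt, if_pos h, div_right_comm, Finset.sum_div]
  congr 2 with i
  rw [sub_div, div_self h.ne', sub_add_cancel, div_mul_eq_mul_div]

end Ratio

section Limits

variable {ν : ℝ} {M : ℕ} {i₀ : Fin M} {ρ : Fin M → ℝ}

lemma tendsto_Anu_update_div_nhdsLT (hν : 0 < ν) (hM : 0 < M)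
    (hpos : ∀ j, j ≠ i₀ → 0 < ρ j) :
    Tendsto (fun t : ℝ => Anu ν hM (update ρ i₀ t) / t) (𝓝[<] 0) (𝓝 1) := by
  have h := (tendsto_sum_update_sub_div (g := fun s => Real.exp ((1 + ν) * s)) (by simp)
    (tendsto_exp_const_mul_atBot (by linarith))
    (fun _ => tendsto_sub_div_nhdsLT_atBot) hpos).div
    (tendsto_sum_update_sub_div (by simp) (tendsto_exp_const_mul_atBot hν)
      (fun _ => tendsto_sub_div_nhdsLT_atBot) hpos) one_ne_zero
  refine (div_one (1 : ℝ) ▸ h).congr' ?_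
  filter_upwards [nhdsWithin_le_nhds (eventually_rmin_update_eq hM hpos), self_mem_nhdsWithin]
    with t hr (ht : t < 0)
  have hratio := Anu_div_rmin_of_neg (ν := ν) hM (hr ▸ ht)
  rw [hr] at hratio
  exact hratio.symm

lemma tendsto_Anu_update_div_nhdsGT (hν : 0 < ν) (hM : 0 < M)
    (hpos : ∀ j, j ≠ i₀ → 0 < ρ j) :
    Tendsto (fun t : ℝ => Anu ν hM (update ρ i₀ t) / t) (𝓝[>] 0) (𝓝 1) := by
  have h := (tendsto_sum_update_sub_div (by simp) (tendsto_add_one_mul_exp_neg_mul_atTop hν)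
    (fun _ => tendsto_sub_div_nhdsGT_atTop) hpos).div
    (tendsto_sum_update_sub_div (by simp) (tendsto_exp_neg_mul_atTop hν)
      (fun _ => tendsto_sub_div_nhdsGT_atTop) hpos) one_ne_zero
  refine (div_one (1 : ℝ) ▸ h).congr' ?_
  filter_upwards [nhdsWithin_le_nhds (eventually_rmin_update_eq hM hpos), self_mem_nhdsWithin]
    with t hr (ht : 0 < t)
  have hratio := Anu_div_rmin_of_pos (ν := ν) hM (hr ▸ ht)
  rw [hr] at hratio
  exact hratio.symm

end Limits

/-- With the other arguments fixed at positive values, the new AND-operator tends to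
`0` as its remaining argument tends to `0` (from either side), and the corresponding
difference quotient tends to `1`. -/
theorem Anu_limit_at_zero (ν : ℝ) (hν : 0 < ν) (M : ℕ) (hM : 0 < M)
    (i₀ : Fin M) (ρ : Fin M → ℝ) (hpos : ∀ j, j ≠ i₀ → 0 < ρ j) :
    Filter.Tendsto (fun t : ℝ => Anu ν hM (Function.update ρ i₀ t))
      (nhdsWithin 0 {0}ᶜ) (nhds 0) ∧
    Filter.Tendsto (fun t : ℝ => Anu ν hM (Function.update ρ i₀ t) / t)
      (nhdsWithin 0 {0}ᶜ) (nhds 1) := by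
  have hquot : Tendsto (fun t : ℝ => Anu ν hM (update ρ i₀ t) / t) (𝓝[≠] 0) (𝓝 1) := by
    rw [← nhdsLT_sup_nhdsGT]
    exact (tendsto_Anu_update_div_nhdsLT hν hM hpos).sup (tendsto_Anu_update_div_nhdsGT hν hM hpos)
  refine ⟨?_, hquot⟩
  have h := hquot.mul (tendsto_id.mono_left nhdsWithin_le_nhds : Tendsto id (𝓝[≠] (0 : ℝ)) (𝓝 0))
  refine (one_mul (0 : ℝ) ▸ h).congr' ?_
  filter_upwards [self_mem_nhdsWithin] with t ht
  exact div_mul_cancel₀ _ ht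
end

section
/- Suppose A : (Fin M → ℝ) → ℝ is scale-invariant (A(αρ) = α·A(ρ) for all α ≥ 0), sound, continuous, and min/max bounded, and fix ρ₁ ≠ 0 and positive reference values ρ̄_2,…,ρ̄_M > 0. Then lim_{ε→0} A(ε, ρ̄₂,…,ρ̄_M)/ε = 1 holds if and only if lim_{c→∞} A(ρ₁, c·ρ̄₂,…,c·ρ̄_M) = ρ₁ (where along the limit ε is taken with the same sign as ρ₁ and c = ρ₁/ε). -/
open Filter Set Topology Function

lemma map_const_div_atTop {𝕜 : Type*} [Field 𝕜] [LinearOrder 𝕜] [IsStrictOrderedRing 𝕜]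
    [TopologicalSpace 𝕜] [OrderTopology 𝕜] {r : 𝕜} (hr : r ≠ 0) :
    map (r / ·) atTop = 𝓝[if 0 < r then Ioi 0 else Iio 0] 0 := by
  refine map_eq_of_inverse (r / ·) (funext fun x => div_div_cancel₀ hr) ?_ ?_
  · refine tendsto_nhdsWithin_iff.2 ⟨tendsto_id.const_div_atTop r, ?_⟩
    filter_upwards [eventually_gt_atTop 0] with c hc
    split_ifs with hr_pos
    · exact div_pos hr_pos hc
    · exact div_neg_of_neg_of_pos (lt_of_le_of_ne (not_lt.1 hr_pos) hr) hc
  · simp only [div_eq_mul_inv]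
    split_ifs with hr_pos
    · exact tendsto_inv_nhdsGT_zero.const_mul_atTop hr_pos
    · exact tendsto_inv_nhdsLT_zero.const_mul_atBot_of_neg (lt_of_le_of_ne (not_lt.1 hr_pos) hr)

lemma apply_update_const_mul {ι : Type*} [DecidableEq ι] {A : (ι → ℝ) → ℝ}
    (hscale : ∀ α : ℝ, 0 ≤ α → ∀ ρ : ι → ℝ, A (fun i => α * ρ i) = α * A ρ)
    {c : ℝ} (hc : 0 ≤ c) (ρ : ι → ℝ) (i : ι) (x : ℝ) :
    A (update (fun j => c * ρ j) i (c * x)) = c * A (update ρ i x) := by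
  rw [← hscale c hc]
  exact congrArg A (update_smul c ρ i x)

theorem slope_one_iff_saturation_general
    (M : ℕ) (A : (Fin M → ℝ) → ℝ)
    (hscale : ∀ α : ℝ, 0 ≤ α → ∀ ρ : Fin M → ℝ, A (fun i => α * ρ i) = α * A ρ)
    (i₀ : Fin M) (r₁ : ℝ) (hr₁ : r₁ ≠ 0)
    (ρbar : Fin M → ℝ) :
    Filter.Tendsto (fun ε : ℝ => A (Function.update ρbar i₀ ε) / ε)
        (nhdsWithin 0 (if 0 < r₁ then Set.Ioi 0 else Set.Iio 0)) (nhds 1) ↔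
      Filter.Tendsto (fun c : ℝ => A (Function.update (fun j => c * ρbar j) i₀ r₁))
        Filter.atTop (nhds r₁) := by
  set slope : ℝ → ℝ := fun ε => A (update ρbar i₀ ε) / ε
  have hsaturation : ∀ᶠ c in atTop,
      r₁ * slope (r₁ / c) = A (update (fun j => c * ρbar j) i₀ r₁) := by
    filter_upwards [eventually_gt_atTop 0] with c hc
    have hscaled := apply_update_const_mul hscale hc.le ρbar i₀ (r₁ / c)
    rw [mul_div_cancel₀ r₁ hc.ne'] at hscaled
    rw [hscaled]
    simp only [slope]
    field_simp
  rw [← map_const_div_atTop hr₁, tendsto_map'_iff, ← tendsto_const_smul_iff₀ hr₁, smul_eq_mul,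
    mul_one]
  exact tendsto_congr' hsaturation

/-- Proposition 4: for a scale-invariant, sound, continuous, min/max bounded
AND-operator, the slope-one condition at a zero crossing of one argument is equivalent
to saturation at that argument's value as all other arguments grow without bound. -/
theorem slope_one_iff_saturation
    (M : ℕ) (hM : 0 < M) (A : (Fin M → ℝ) → ℝ)
    (hscale : ∀ α : ℝ, 0 ≤ α → ∀ ρ : Fin M → ℝ, A (fun i => α * ρ i) = α * A ρ)
    (hsound : ∀ ρ : Fin M → ℝ, 0 ≤ A ρ ↔ ∀ i, 0 ≤ ρ i)
    (hcont : Continuous A)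
    (hbound : ∀ ρ : Fin M → ℝ, rmin hM ρ ≤ A ρ ∧ A ρ ≤ rmax hM ρ)
    (i₀ : Fin M) (r₁ : ℝ) (hr₁ : r₁ ≠ 0)
    (ρbar : Fin M → ℝ) (hρbar : ∀ j, j ≠ i₀ → 0 < ρbar j) :
    Filter.Tendsto (fun ε : ℝ => A (Function.update ρbar i₀ ε) / ε)
        (nhdsWithin 0 (if 0 < r₁ then Set.Ioi 0 else Set.Iio 0)) (nhds 1) ↔
      Filter.Tendsto (fun c : ℝ => A (Function.update (fun j => c * ρbar j) i₀ r₁))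
        Filter.atTop (nhds r₁) :=
  slope_one_iff_saturation_general M A hscale i₀ r₁ hr₁ ρbar
end

section
/- Shadow-lifting for the new operator: for ν > 0, M ≥ 1, ρ ≠ 0, and any index i, the partial derivative of A_ν with respect to its i-th argument at the constant point (ρ,…,ρ) exists and equals 1/M. In particular it is strictly positive, so A_ν satisfies the shadow-lifting property. -/
open Finset

/-! In both regimes `A_ν` is a weighted mean `∑ₖ xₖ wₖ / ∑ₖ wₖ`: for `ρ_min > 0` of the values
`xₖ = ρₖ` with weights `e^{-ν ρ̃ₖ}`, for `ρ_min < 0` of the values `xₖ = ρ_min e^{ρ̃ₖ}` with weights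
`e^{ν ρ̃ₖ}`. At a constant point all values coincide, so the derivatives of the weights drop out,
and all weights equal `1`. Moreover each `xₖ` is tangent to `ρₖ` there, even when `ρ_min` moves
with `ρ`. So along `eᵢ` the derivative is the mean `1/M` of the derivatives of the coordinates.
Along this line `ρ_min` is `t` for `t ≤ r` and `r` for `t ≥ r` (if `M ≥ 2`), so the two one-sided
derivatives are computed separately and agree. -/

open Filter Topology Set Real

section WeightedMean

variable {ι : Type*} [Fintype ι]

theorem hasDerivAt_weightedMean {w x : ι → ℝ → ℝ} {x' : ι → ℝ} {r c : ℝ}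
    (hw : ∀ k, DifferentiableAt ℝ (w k) r) (hx : ∀ k, HasDerivAt (x k) (x' k) r)
    (hxc : ∀ k, x k r = c) (hW : ∑ k, w k r ≠ 0) :
    HasDerivAt (fun t => (∑ k, x k t * w k t) / ∑ k, w k t)
      ((∑ k, x' k * w k r) / ∑ k, w k r) r := by
  have hN := HasDerivAt.fun_sum (u := univ) fun k _ => (hx k).fun_mul (hw k).hasDerivAt
  have hD := HasDerivAt.fun_sum (u := univ) fun k _ => (hw k).hasDerivAt
  refine (hN.fun_div hD hW).congr_deriv ?_
  simp only [hxc, sum_add_distrib, ← mul_sum]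
  field_simp
  ring

end WeightedMean

theorem hasDerivAt_mul_exp_sub_div_self {m y : ℝ → ℝ} {y' r : ℝ} (hm : DifferentiableAt ℝ m r)
    (hy : HasDerivAt y y' r) (hmy : m r = y r) (hm0 : m r ≠ 0) :
    HasDerivAt (fun t => m t * exp ((y t - m t) / m t)) y' r := by
  obtain ⟨m', hm'⟩ : ∃ m', HasDerivAt m m' r := ⟨_, hm.hasDerivAt⟩
  refine (hm'.fun_mul ((hy.fun_sub hm').fun_div hm' hm0).exp).congr_deriv ?_
  -- on the diagonal `∂_y = e⁰ = 1` and `∂_m = e⁰ (1 - y / m) = 0`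
  rw [← hmy, sub_self, zero_div, exp_zero]
  field_simp
  ring

noncomputable def anuWithMin {ι : Type*} [Fintype ι] (ν m : ℝ) (ρ : ι → ℝ) : ℝ :=
  if m < 0 then
    (∑ i, m * exp ((1 + ν) * ((ρ i - m) / m))) / ∑ i, exp (ν * ((ρ i - m) / m))
  else if 0 < m then
    (∑ i, ρ i * exp (-ν * ((ρ i - m) / m))) / ∑ i, exp (-ν * ((ρ i - m) / m))
  else 0

theorem Anu_eq_anuWithMin (ν : ℝ) {M : ℕ} (hM : 0 < M) (ρ : Fin M → ℝ) :
    Anu ν hM ρ = anuWithMin ν (rmin hM ρ) ρ :=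
  rfl

section anuWithMin

variable {ι : Type*} [Fintype ι] (ν : ℝ)

theorem anuWithMin_of_neg {m : ℝ} (hm : m < 0) (ρ : ι → ℝ) :
    anuWithMin ν m ρ = (∑ i, m * exp ((ρ i - m) / m) * exp (ν * ((ρ i - m) / m))) /
      ∑ i, exp (ν * ((ρ i - m) / m)) := by
  rw [anuWithMin, if_pos hm]
  congr 1
  refine sum_congr rfl fun i _ => ?_
  rw [add_mul, one_mul, exp_add, mul_assoc]

theorem anuWithMin_of_pos {m : ℝ} (hm : 0 < m) (ρ : ι → ℝ) :
    anuWithMin ν m ρ = (∑ i, ρ i * exp (-ν * ((ρ i - m) / m))) /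
      ∑ i, exp (-ν * ((ρ i - m) / m)) := by
  rw [anuWithMin, if_neg hm.not_gt, if_pos hm]

theorem hasDerivAt_anuWithMin [Nonempty ι] {m : ℝ → ℝ} {ρ : ℝ → ι → ℝ} {ρ' : ι → ℝ} {r c : ℝ}
    (hm : DifferentiableAt ℝ m r) (hρ : HasDerivAt ρ ρ' r) (hmc : m r = c)
    (hρc : ρ r = fun _ => c) (hc : c ≠ 0) :
    HasDerivAt (fun t => anuWithMin ν (m t) (ρ t)) ((∑ k, ρ' k) / Fintype.card ι) r := by
  have hρk : ∀ k, HasDerivAt (fun t => ρ t k) (ρ' k) r := hasDerivAt_pi.1 hρ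
  have hm0 : m r ≠ 0 := hmc ▸ hc
  have hweight : ∀ μ k, DifferentiableAt ℝ (fun t => exp (μ * ((ρ t k - m t) / m t))) r :=
    fun μ k => ((((hρk k).differentiableAt.sub hm).div hm hm0).const_mul μ).exp
  have hρkc : ∀ k, ρ r k = m r := by simp [hρc, hmc]
  have hW : ∀ μ, ∑ k, exp (μ * ((ρ r k - m r) / m r)) ≠ 0 := by simp [hρkc]
  rcases hc.lt_or_gt with hneg | hpos
  · have hev : (fun t => anuWithMin ν (m t) (ρ t)) =ᶠ[𝓝 r] fun t =>
        (∑ k, m t * exp ((ρ t k - m t) / m t) * exp (ν * ((ρ t k - m t) / m t))) /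
          ∑ k, exp (ν * ((ρ t k - m t) / m t)) := by
      filter_upwards [hm.continuousAt.eventually_lt_const (hmc ▸ hneg)] with t ht
      exact anuWithMin_of_neg ν ht (ρ t)
    have hval : ∀ k, HasDerivAt (fun t => m t * exp ((ρ t k - m t) / m t)) (ρ' k) r :=
      fun k => hasDerivAt_mul_exp_sub_div_self hm (hρk k) (hρkc k).symm hm0
    refine ((hasDerivAt_weightedMean (c := m r) (hweight ν) hval (by simp [hρkc]) (hW ν)
      ).congr_of_eventuallyEq hev).congr_deriv ?_
    simp [hρkc]
  · have hev : (fun t => anuWithMin ν (m t) (ρ t)) =ᶠ[𝓝 r] fun t =>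
        (∑ k, ρ t k * exp (-ν * ((ρ t k - m t) / m t))) /
          ∑ k, exp (-ν * ((ρ t k - m t) / m t)) := by
      filter_upwards [hm.continuousAt.eventually_const_lt (hmc ▸ hpos)] with t ht
      exact anuWithMin_of_pos ν ht (ρ t)
    refine ((hasDerivAt_weightedMean (hweight (-ν)) hρk hρkc (hW (-ν))
      ).congr_of_eventuallyEq hev).congr_deriv ?_
    simp [hρkc]

end anuWithMin

theorem HasDerivAt.of_eqOn_Iic_Ici {f g h : ℝ → ℝ} {f' r : ℝ} (hg : HasDerivAt g f' r)
    (hh : HasDerivAt h f' r) (hfg : EqOn f g (Iic r)) (hfh : EqOn f h (Ici r)) :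
    HasDerivAt f f' r := by
  have hunion := (hg.hasDerivWithinAt.congr hfg (hfg self_mem_Iic)).union
    (hh.hasDerivWithinAt.congr hfh (hfh self_mem_Ici))
  rwa [Iic_union_Ici, hasDerivWithinAt_univ] at hunion

section rmin

variable {M : ℕ} (hM : 0 < M) (i : Fin M) {r t : ℝ}

theorem rmin_const : rmin hM (fun _ => t) = t :=
  inf'_const _ _

theorem rmin_update_of_le (h : t ≤ r) : rmin hM (Function.update (fun _ => r) i t) = t := by
  refine le_antisymm ?_ (le_inf' _ _ fun j _ => ?_)
  · exact (inf'_le _ (mem_univ i)).trans_eq (by simp)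
  · rcases eq_or_ne j i with rfl | hj
    · simp
    · simpa [hj] using h

theorem rmin_update_of_ge (hM2 : 1 < M) (h : r ≤ t) :
    rmin hM (Function.update (fun _ => r) i t) = r := by
  obtain ⟨j, hj⟩ := Fintype.exists_ne_of_one_lt_card (by simpa using hM2) i
  refine le_antisymm ?_ (le_inf' _ _ fun k _ => ?_)
  · exact (inf'_le _ (mem_univ j)).trans_eq (by simp [hj])
  · rcases eq_or_ne k i with rfl | hk
    · simpa using h
    · simp [hk]

end rmin

theorem Anu_shadow_lifting_general (ν : ℝ) (M : ℕ) (hM : 0 < M)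
    (r : ℝ) (hr : r ≠ 0) (i : Fin M) :
    HasDerivAt (fun t : ℝ => Anu ν hM (Function.update (fun _ : Fin M => r) i t))
      (1 / M) r ∧ (0 : ℝ) < 1 / M := by
  have : Nonempty (Fin M) := ⟨i⟩
  have hbranch : ∀ {m : ℝ → ℝ}, DifferentiableAt ℝ m r → m r = r → HasDerivAt
      (fun t => anuWithMin ν (m t) (Function.update (fun _ : Fin M => r) i t)) (1 / M) r :=
    fun hm hmr => by
      simpa using hasDerivAt_anuWithMin ν hm (hasDerivAt_update _ i r) hmr (by simp) hr
  have hleft := hbranch differentiableAt_id rfl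
  refine ⟨?_, by positivity⟩
  rcases Nat.lt_or_ge 1 M with hM2 | hM1
  · exact hleft.of_eqOn_Iic_Ici (hbranch (differentiableAt_const r) rfl)
      (fun t ht => by rw [Anu_eq_anuWithMin, rmin_update_of_le hM i ht]; rfl)
      (fun t ht => by rw [Anu_eq_anuWithMin, rmin_update_of_ge hM i hM2 ht])
  · obtain rfl : M = 1 := by omega
    refine hleft.congr_of_eventuallyEq (Eventually.of_forall fun t => ?_)
    have hconst : Function.update (fun _ : Fin 1 => r) i t = fun _ => t := by
      funext j
      rw [Subsingleton.elim j i, Function.update_self]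
    dsimp only [id]
    rw [Anu_eq_anuWithMin, hconst, rmin_const]

/-- Shadow-lifting for the new operator: at a nonzero constant point, each partial
derivative of `A_ν` exists and equals `1/M`, in particular it is strictly positive. -/
theorem Anu_shadow_lifting (ν : ℝ) (hν : 0 < ν) (M : ℕ) (hM : 0 < M)
    (r : ℝ) (hr : r ≠ 0) (i : Fin M) :
    HasDerivAt (fun t : ℝ => Anu ν hM (Function.update (fun _ : Fin M => r) i t))
      (1 / M) r ∧ (0 : ℝ) < 1 / M :=
  Anu_shadow_lifting_general ν M hM r hr i
end
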